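/- arXiv:2412.12281 — 9 statements merged into one kernel-verified Lean document; each statement's English description precedes it below -/
import Mathlib

section
/- Let C be a skeletal category all of whose hom-sets are finite. If there exist an epimorphism f : c ⟶ d and an epimorphism g : d ⟶ c between objects c and d, then c = d. (This antisymmetry underlies the paper's claim that the epimorphism matrix is conjugate to a triangular matrix.) -/
/-!
The composite `f ≫ g` is an epimorphic endomorphism of `c`. Precomposition with it is injective
on the finite set `c ⟶ c`, hence surjective, so `f ≫ g` has a right inverse; then `f` is a split
mono and an epi, hence an isomorphism, and skeletality gives `c = d`.
-/

open CategoryTheory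

namespace CategoryTheory

variable {C : Type*} [Category C]

theorem isIso_of_epi_of_finite_end {X : C} [Finite (X ⟶ X)] (e : X ⟶ X) [Epi e] : IsIso e := by
  have hinj : Function.Injective (fun h : X ⟶ X => e ≫ h) := fun _ _ => (cancel_epi e).mp
  obtain ⟨h, hh⟩ := Finite.surjective_of_injective hinj (𝟙 X)
  have : IsSplitMono e := IsSplitMono.mk' ⟨h, hh⟩
  exact isIso_of_epi_of_isSplitMono e

theorem isIso_of_epi_of_epi_of_finite_end {X Y : C} [Finite (X ⟶ X)] (f : X ⟶ Y) (g : Y ⟶ X)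
    [Epi f] [Epi g] : IsIso f := by
  have := isIso_of_epi_of_finite_end (f ≫ g)
  have : IsSplitMono f :=
    IsSplitMono.mk' ⟨g ≫ inv (f ≫ g), by rw [← Category.assoc, IsIso.hom_inv_id]⟩
  exact isIso_of_epi_of_isSplitMono f

end CategoryTheory

/-- In a skeletal category with finite hom-sets, if there are epimorphisms in both
directions between `c` and `d`, then `c = d`. -/
theorem eq_of_epi_of_epi_of_skeletal {C : Type*} [Category C]
    [∀ a b : C, Finite (a ⟶ b)] (hskel : Skeletal C) {c d : C}
    (f : c ⟶ d) (g : d ⟶ c) (hf : Epi f) (hg : Epi g) : c = d :=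
  have := isIso_of_epi_of_epi_of_finite_end f g
  hskel ⟨asIso f⟩
end

section
/- Let C be a category whose hom-sets are finite, and let P be a class of morphisms of C such that every morphism in P is an epimorphism and P is stable under postcomposition with isomorphisms. Then for all objects c, d, the cardinality #Aut(d) of the automorphism group of d divides the number of morphisms c ⟶ d lying in P. (In particular the entries |E(c,d)|/|Aut(d)| of the epimorphism matrix are integers, since Aut(d) acts freely on E(c,d) by the cancellation property of epimorphisms.) -/
open CategoryTheory

/-!
`Aut d` acts on `c ⟶ d` by postcomposition, and the morphisms in `P` form a sub-action.
On epimorphisms this action is free, because `f ≫ g.hom = f ≫ 𝟙 d` cancels to `g.hom = 𝟙 d`.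
A free action identifies its set with the product of the orbit space and the group.
-/

theorem MulAction.card_group_dvd_card_of_isCancelSMul (G X : Type*) [Group G] [MulAction G X]
    [IsCancelSMul G X] : Nat.card G ∣ Nat.card X := by
  rw [Nat.card_congr (selfEquivOrbitsQuotientProd (G := G) (X := X) IsCancelSMul.stabilizer_eq_bot),
    Nat.card_prod]
  exact dvd_mul_left (Nat.card G) _

namespace CategoryTheory

variable {C : Type*} [Category C]

instance Aut.mulActionHom (c d : C) : MulAction (Aut d) (c ⟶ d) :=
  MulAction.compHom _ (Aut.toEnd d)

lemma Aut.eq_one_of_comp_hom_eq_self {c d : C} (f : c ⟶ d) [Epi f] (g : Aut d)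
    (h : f ≫ g.hom = f) : g = 1 :=
  Aut.ext <| (cancel_epi f).mp (h.trans (Category.comp_id f).symm)

def MorphismProperty.homSubMulAction (P : MorphismProperty C)
    (hpost : ∀ {a b b' : C} (f : a ⟶ b) (e : b ≅ b'), P f → P (f ≫ e.hom)) (c d : C) :
    SubMulAction (Aut d) (c ⟶ d) where
  carrier := {f | P f}
  smul_mem' g f := hpost f g

end CategoryTheory

/-- If every morphism in the class `P` is an epimorphism and `P` is stable under
postcomposition with isomorphisms, then `#Aut(d)` divides the number of morphisms
`c ⟶ d` lying in `P`. -/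
theorem card_aut_dvd_card_epiClass {C : Type*} [Category C]
    [∀ a b : C, Finite (a ⟶ b)] (P : MorphismProperty C)
    (hepi : ∀ {a b : C} (f : a ⟶ b), P f → Epi f)
    (hpost : ∀ {a b b' : C} (f : a ⟶ b) (e : b ≅ b'), P f → P (f ≫ e.hom))
    (c d : C) :
    Nat.card (Aut d) ∣ Nat.card {f : c ⟶ d // P f} := by
  have : IsCancelSMul (Aut d) (P.homSubMulAction hpost c d) :=
    isCancelSMul_iff_eq_one_of_smul_eq.mpr fun g f hgf =>
      have := hepi f.1 f.2
      Aut.eq_one_of_comp_hom_eq_self f.1 g (congrArg Subtype.val hgf)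
  exact MulAction.card_group_dvd_card_of_isCancelSMul (Aut d) (P.homSubMulAction hpost c d)
end

section
/- Let C be a finite skeletal category and let P be a class of morphisms of C containing all isomorphisms, closed under composition, and such that every morphism in P is an epimorphism. Then the matrix E over ℚ, indexed by the objects of C, with entries E c d = (number of morphisms c ⟶ d in P) / #Aut(d), has determinant 1. (The paper: 'the epimorphism matrix is conjugate to a lower triangular matrix' with diagonal entries 1.) -/
/-!
Write `a ≤ b` when there is an epimorphism `a ⟶ b`. In a skeletal category with finite
endomorphism sets this is a partial order: an epimorphic endomorphism of a finite hom-set is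
invertible, so epimorphisms `a ⟶ b ⟶ a` force `a ≅ b`, hence `a = b`. The entry `E c d`
vanishes unless `c ≤ d`, so `E` is triangular for a linear extension of this order, and its
diagonal entries are `1` since the `P`-endomorphisms of `c` are exactly its automorphisms.
-/

open CategoryTheory

namespace Matrix

variable {n R : Type*} [Fintype n] [DecidableEq n] [CommRing R]

theorem det_of_forall_not_rel_eq_zero (r : n → n → Prop) [IsPartialOrder n r]
    (M : Matrix n n R) (hM : ∀ i j, ¬ r i j → M i j = 0) : M.det = ∏ i, M i i := by
  obtain ⟨s, hs, hrs⟩ := extend_partialOrder r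
  let _ : LinearOrder n :=
    { le := s
      le_refl := hs.refl
      le_trans := hs.trans
      le_antisymm := hs.antisymm
      le_total := hs.total
      toDecidableLE := Classical.decRel _ }
  exact det_of_isUpperTriangular fun i j hji => hM i j fun hij => hji.not_ge (hrs _ _ hij)

end Matrix

namespace CategoryTheory

variable {C : Type*} [Category C]

theorem isIso_of_epi_endo {c : C} [Finite (c ⟶ c)] (f : c ⟶ c) [Epi f] : IsIso f := by
  have hinj : Function.Injective (fun g : c ⟶ c => f ≫ g) := fun _ _ => (cancel_epi f).1
  obtain ⟨g, hg⟩ := Finite.injective_iff_surjective.1 hinj (𝟙 c)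
  have : IsSplitMono f := IsSplitMono.mk' ⟨g, hg⟩
  exact isIso_of_epi_of_isSplitMono f

theorem isIso_of_epi_of_epi {a b : C} [Finite (a ⟶ a)] (f : a ⟶ b) (g : b ⟶ a) [Epi f] [Epi g] :
    IsIso f := by
  have := isIso_of_epi_endo (f ≫ g)
  have : IsSplitMono f := IsSplitMono.mk' ⟨g ≫ inv (f ≫ g), by rw [← Category.assoc, IsIso.hom_inv_id]⟩
  exact isIso_of_epi_of_isSplitMono f

def ExistsEpi (a b : C) : Prop := ∃ f : a ⟶ b, Epi f

theorem isPartialOrder_existsEpi (hskel : Skeletal C) [∀ a : C, Finite (a ⟶ a)] :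
    IsPartialOrder C ExistsEpi where
  refl a := ⟨𝟙 a, inferInstance⟩
  trans _ _ _ := fun ⟨f, _⟩ ⟨g, _⟩ => ⟨f ≫ g, inferInstance⟩
  antisymm _ _ := fun ⟨f, _⟩ ⟨g, _⟩ => hskel ⟨@asIso _ _ _ _ f (isIso_of_epi_of_epi f g)⟩

noncomputable def subtypeEquivAutOfIffIsIso (P : MorphismProperty C) (c : C)
    (hP : ∀ f : c ⟶ c, P f ↔ IsIso f) : {f : c ⟶ c // P f} ≃ Aut c where
  toFun f := @asIso _ _ _ _ f.1 ((hP f.1).1 f.2)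
  invFun g := ⟨g.hom, (hP _).2 (Iso.isIso_hom g)⟩
  left_inv _ := rfl
  right_inv _ := Iso.ext rfl

end CategoryTheory

/-- In a finite skeletal category, if `P` is a class of morphisms containing all
isomorphisms, closed under composition, and consisting of epimorphisms, then the
epimorphism matrix `E c d = |P(c,d)| / #Aut(d)` has determinant `1`. -/
theorem det_epiMatrix_eq_one {C : Type*} [Category C] [Fintype C] [DecidableEq C]
    [∀ a b : C, Finite (a ⟶ b)] (hskel : Skeletal C)
    (P : MorphismProperty C)
    (hiso : ∀ {a b : C} (f : a ⟶ b), IsIso f → P f)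
    (hcomp : ∀ {a b c : C} (f : a ⟶ b) (g : b ⟶ c), P f → P g → P (f ≫ g))
    (hepi : ∀ {a b : C} (f : a ⟶ b), P f → Epi f) :
    (Matrix.of fun c d : C =>
      (Nat.card {f : c ⟶ d // P f} : ℚ) / (Nat.card (Aut d) : ℚ)).det = 1 := by
  have := isPartialOrder_existsEpi hskel
  rw [Matrix.det_of_forall_not_rel_eq_zero ExistsEpi]
  · refine Finset.prod_eq_one fun c _ => ?_
    have e : {f : c ⟶ c // P f} ≃ Aut c := subtypeEquivAutOfIffIsIso P c fun f =>
      ⟨fun hf => have := hepi f hf; isIso_of_epi_endo f, hiso f⟩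
    have : Finite (Aut c) := Finite.of_equiv _ e
    rw [Matrix.of_apply, Nat.card_congr e, div_self (Nat.cast_ne_zero.2 Nat.card_pos.ne')]
  · intro c d hcd
    have : IsEmpty {f : c ⟶ d // P f} := ⟨fun f => hcd ⟨f.1, hepi f.1 f.2⟩⟩
    simp
end

section
/- Let C be a finite skeletal category and let Q be a class of morphisms of C containing all isomorphisms, closed under composition, and such that every morphism in Q is a monomorphism. Then the matrix M over ℚ, indexed by the objects of C, with entries M c d = (number of morphisms c ⟶ d in Q) / #Aut(c), has determinant 1. (The paper: 'the monomorphism matrix is conjugate to an upper triangular matrix' with diagonal entries 1.) -/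
open CategoryTheory

/-!
A `Q`-morphism is mono, and a mono endomorphism of an object with finite endomorphism set is
invertible (postcomposition with it is injective, hence surjective, on `End c`). So a pair of
`Q`-morphisms `c ⟶ d`, `d ⟶ c` makes `c ≅ d`, hence `c = d` by skeletality: "there is a
`Q`-morphism `c ⟶ d`" is a partial order on the objects, and the matrix is upper triangular for
any linear extension of it. On the diagonal, the `Q`-endomorphisms of `c` are exactly its
automorphisms, so every diagonal entry is `1`.
-/

theorem Matrix.det_eq_prod_diag_of_eq_zero_of_not_le {n R : Type*} [Fintype n] [DecidableEq n]
    [CommRing R] [PartialOrder n] (M : Matrix n n R) (h : ∀ i j, ¬i ≤ j → M i j = 0) :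
    M.det = ∏ i, M i i := by
  let _ : Fintype (LinearExtension n) := ‹Fintype n›
  let _ : DecidableEq (LinearExtension n) := ‹DecidableEq n›
  let M' : Matrix (LinearExtension n) (LinearExtension n) R := M
  have hM' : M'.IsUpperTriangular := fun i j hji =>
    h i j fun hij => (toLinearExtension.monotone hij).not_gt hji
  exact det_of_isUpperTriangular (M := M') hM'

namespace CategoryTheory

variable {C : Type*} [Category C]

instance {c : C} [Finite (c ⟶ c)] : Finite (Aut c) :=
  Finite.of_injective Iso.hom fun _ _ h => Iso.ext h

theorem isIso_of_mono_of_finite {c : C} [Finite (c ⟶ c)] (f : c ⟶ c) [Mono f] : IsIso f := by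
  obtain ⟨g, hgf⟩ : ∃ g, g ≫ f = 𝟙 c :=
    Finite.injective_iff_surjective.mp (fun _ _ => (cancel_mono f).mp) (𝟙 c)
  refine ⟨g, (cancel_mono f).mp ?_, hgf⟩
  rw [Category.assoc, hgf, Category.comp_id, Category.id_comp]

theorem isIso_of_mono_of_mono {c d : C} [Finite (d ⟶ d)] (f : c ⟶ d) (g : d ⟶ c) [Mono f]
    [Mono g] : IsIso f := by
  have : IsIso (g ≫ f) := isIso_of_mono_of_finite _
  have : IsSplitEpi f := IsSplitEpi.mk' ⟨inv (g ≫ f) ≫ g, by simp⟩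
  exact isIso_of_mono_of_isSplitEpi f

theorem Skeletal.eq_of_mono_of_mono (hC : Skeletal C) {c d : C} [Finite (d ⟶ d)] (f : c ⟶ d)
    (g : d ⟶ c) [Mono f] [Mono g] : c = d :=
  have := isIso_of_mono_of_mono f g
  hC ⟨asIso f⟩

variable (Q : MorphismProperty C)

noncomputable def MorphismProperty.endEquivAutOfMono {c : C} [Finite (c ⟶ c)]
    (hiso : ∀ (f : c ⟶ c), IsIso f → Q f) (hmono : ∀ (f : c ⟶ c), Q f → Mono f) : {f : c ⟶ c // Q f} ≃ Aut c where
  toFun f := have := hmono f.1 f.2; have := isIso_of_mono_of_finite f.1; asIso f.1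
  invFun g := ⟨g.hom, hiso _ g.isIso_hom⟩
  left_inv _ := rfl
  right_inv _ := Iso.ext rfl

abbrev MorphismProperty.partialOrderOfMono [∀ c : C, Finite (c ⟶ c)] (hC : Skeletal C)
    (hid : ∀ c : C, Q (𝟙 c))
    (hcomp : ∀ {a b c : C} (f : a ⟶ b) (g : b ⟶ c), Q f → Q g → Q (f ≫ g))
    (hmono : ∀ {a b : C} (f : a ⟶ b), Q f → Mono f) : PartialOrder C where
  le c d := Nonempty {f : c ⟶ d // Q f}
  le_refl c := ⟨⟨𝟙 c, hid c⟩⟩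
  le_trans _ _ _ := fun ⟨f⟩ ⟨g⟩ => ⟨⟨f.1 ≫ g.1, hcomp _ _ f.2 g.2⟩⟩
  le_antisymm _ _ := fun ⟨f⟩ ⟨g⟩ =>
    have := hmono _ f.2
    have := hmono _ g.2
    hC.eq_of_mono_of_mono f.1 g.1

end CategoryTheory

/-- In a finite skeletal category, if `Q` is a class of morphisms containing all
isomorphisms, closed under composition, and consisting of monomorphisms, then the
monomorphism matrix `M c d = |Q(c,d)| / #Aut(c)` has determinant `1`. -/
theorem det_monoMatrix_eq_one {C : Type*} [Category C] [Fintype C] [DecidableEq C]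
    [∀ a b : C, Finite (a ⟶ b)] (hskel : Skeletal C)
    (Q : MorphismProperty C)
    (hiso : ∀ {a b : C} (f : a ⟶ b), IsIso f → Q f)
    (hcomp : ∀ {a b c : C} (f : a ⟶ b) (g : b ⟶ c), Q f → Q g → Q (f ≫ g))
    (hmono : ∀ {a b : C} (f : a ⟶ b), Q f → Mono f) :
    (Matrix.of fun c d : C =>
      (Nat.card {f : c ⟶ d // Q f} : ℚ) / (Nat.card (Aut c) : ℚ)).det = 1 := by
  let _ : PartialOrder C :=
    Q.partialOrderOfMono hskel (fun c => hiso _ inferInstance) hcomp hmono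
  rw [Matrix.det_eq_prod_diag_of_eq_zero_of_not_le]
  · refine Finset.prod_eq_one fun c _ => ?_
    rw [Matrix.of_apply, Nat.card_congr (Q.endEquivAutOfMono (fun f => hiso f) fun f => hmono f)]
    exact div_self (Nat.cast_ne_zero.mpr Nat.card_pos.ne')
  · intro c d hcd
    have : IsEmpty {f : c ⟶ d // Q f} := not_nonempty_iff.mp hcd
    simp [Nat.card_of_isEmpty]
end

section
/- (Yoshida's decomposition of the hom-set matrix.) Let C be a finite skeletal category equipped with an epi-mono factorization system (P, Q). Define matrices over ℚ indexed by the objects of C: the hom-set matrix H with H c d = #Hom(c,d); the epimorphism matrix E with E c d = (number of morphisms c ⟶ d in P) / #Aut(d); the automorphism matrix A with A c d = #Aut(c) if c = d and 0 otherwise; and the monomorphism matrix M with M c d = (number of morphisms c ⟶ d in Q) / #Aut(c). Then H = E * A * M. -/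
/-!
Every morphism `f : c ⟶ d` factors as `e ≫ m` with `e ∈ P`, `m ∈ Q`, and in a skeletal
category the middle object `z` of such a factorization is determined by `f`. Grouping
`Hom(c, d)` by this object, the pairs `(e, m) ∈ P(c, z) × Q(z, d)` composing to a given `f`
form a torsor under `Aut z`, acting by `φ • (e, m) = (e ≫ φ, φ⁻¹ ≫ m)`: the action is free
because `e` is epi and transitive by uniqueness of factorizations. Hence
`#Hom(c, d) = ∑ z, #P(c, z) * #Q(z, d) / #Aut z`, the `(c, d)` entry of `E * A * M`.
-/

open CategoryTheory

theorem Nat.card_eq_sum_card_fiber {α β : Type*} [Finite α] [Fintype β] (g : α → β) :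
    Nat.card α = ∑ b, Nat.card {a // g a = b} := by
  rw [Nat.card_congr (Equiv.sigmaFiberEquiv g).symm, Nat.card_sigma]

theorem Nat.card_eq_card_mul_of_card_fiber_eq {α β : Type*} [Finite α] [Finite β] (g : α → β)
    {k : ℕ} (h : ∀ b, Nat.card {a // g a = b} = k) : Nat.card α = Nat.card β * k := by
  have := Fintype.ofFinite β
  simp [Nat.card_eq_sum_card_fiber g, h, Nat.card_eq_fintype_card]

namespace CategoryTheory

variable {C : Type*} [Category C]

instance Iso.finite {X Y : C} [Finite (X ⟶ Y)] : Finite (X ≅ Y) :=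
  Finite.of_injective Iso.hom fun _ _ h => Iso.ext h

instance Aut.finite {X : C} [Finite (X ⟶ X)] : Finite (Aut X) :=
  inferInstanceAs (Finite (X ≅ X))

namespace MorphismProperty

variable (P Q : MorphismProperty C)

def HasUniqueFactorizations : Prop :=
  ∀ ⦃c d z z' : C⦄ (e : c ⟶ z) (e' : c ⟶ z') (m : z ⟶ d) (m' : z' ⟶ d),
    P e → P e' → Q m → Q m' → e ≫ m = e' ≫ m' →
      ∃ φ : z ≅ z', e ≫ φ.hom = e' ∧ φ.hom ≫ m' = m

variable {P Q}

namespace HasUniqueFactorizations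

theorem obj_eq_of_comp_eq (huniq : P.HasUniqueFactorizations Q) (hskel : Skeletal C) {c d z z' : C}
    {e : c ⟶ z} {e' : c ⟶ z'} {m : z ⟶ d} {m' : z' ⟶ d} (he : P e) (he' : P e') (hm : Q m)
    (hm' : Q m') (h : e ≫ m = e' ≫ m') : z = z' :=
  let ⟨φ, _⟩ := huniq e e' m m' he he' hm hm' h
  hskel ⟨φ⟩

theorem card_factorizations_eq_card_aut [P.RespectsIso] [Q.RespectsIso]
    (huniq : P.HasUniqueFactorizations Q) {c z d : C} {e : c ⟶ z} {m : z ⟶ d} [Epi e]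
    (he : P e) (hm : Q m) :
    Nat.card {p : {e' : c ⟶ z // P e'} × {m' : z ⟶ d // Q m'} // p.1.1 ≫ p.2.1 = e ≫ m} =
      Nat.card (Aut z) := by
  refine (Nat.card_eq_of_bijective (fun φ : z ≅ z =>
    ⟨(⟨e ≫ φ.hom, RespectsIso.postcomp P _ _ he⟩, ⟨φ.inv ≫ m, RespectsIso.precomp Q _ _ hm⟩),
      by simp⟩) ⟨?_, ?_⟩).symm
  · intro φ ψ h
    have hφψ : e ≫ φ.hom = e ≫ ψ.hom := congrArg (fun p => p.1.1.1) h
    exact Iso.ext (cancel_epi e |>.mp hφψ)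
  · rintro ⟨⟨⟨e', he'⟩, ⟨m', hm'⟩⟩, h⟩
    obtain ⟨φ, rfl, hφ⟩ := huniq e e' m m' he he' hm hm' h.symm
    refine ⟨φ, ?_⟩
    simp [← hφ]

end HasUniqueFactorizations

variable [P.HasFactorization Q] [∀ a b : C, Finite (a ⟶ b)]

theorem card_prod_eq_card_fiber_mul_card_aut [P.RespectsIso] [Q.RespectsIso]
    (hskel : Skeletal C) (hPepi : P ≤ epimorphisms C) (huniq : P.HasUniqueFactorizations Q)
    (c z d : C) :
    Nat.card {e : c ⟶ z // P e} * Nat.card {m : z ⟶ d // Q m} =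
      Nat.card {f : c ⟶ d // (P.factorizationData Q f).Z = z} * Nat.card (Aut z) := by
  rw [← Nat.card_prod]
  refine Nat.card_eq_card_mul_of_card_fiber_eq (fun p => ⟨p.1.1 ≫ p.2.1,
    let D := P.factorizationData Q (p.1.1 ≫ p.2.1)
    huniq.obj_eq_of_comp_eq hskel D.hi p.1.2 D.hp p.2.2 D.fac⟩) ?_
  rintro ⟨f, rfl⟩
  set D := P.factorizationData Q f
  have : Epi D.i := hPepi _ D.hi
  rw [← huniq.card_factorizations_eq_card_aut D.hi D.hp, D.fac]
  simp only [Subtype.ext_iff]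
  rfl

theorem card_hom_eq_sum [Fintype C] [P.RespectsIso] [Q.RespectsIso]
    (hskel : Skeletal C) (hPepi : P ≤ epimorphisms C) (huniq : P.HasUniqueFactorizations Q)
    (c d : C) :
    (Nat.card (c ⟶ d) : ℚ) =
      ∑ z, (Nat.card {e : c ⟶ z // P e} * Nat.card {m : z ⟶ d // Q m} : ℚ) /
        Nat.card (Aut z) := by
  rw [Nat.card_eq_sum_card_fiber fun f : c ⟶ d => (P.factorizationData Q f).Z]
  push_cast
  refine Finset.sum_congr rfl fun z _ => ?_
  have hAut : (Nat.card (Aut z) : ℚ) ≠ 0 := by exact_mod_cast Nat.card_pos.ne'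
  rw [eq_div_iff hAut]
  exact_mod_cast (card_prod_eq_card_fiber_mul_card_aut hskel hPepi huniq c z d).symm

end MorphismProperty

end CategoryTheory

/-- Yoshida's decomposition `H = E * A * M` of the hom-set matrix of a finite skeletal
category equipped with an epi-mono factorization system `(P, Q)`. -/
theorem homMatrix_eq_epi_mul_aut_mul_mono {C : Type*} [Category C] [Fintype C]
    [DecidableEq C] [∀ a b : C, Finite (a ⟶ b)] (hskel : Skeletal C)
    (P Q : MorphismProperty C)
    (hPepi : ∀ {a b : C} (f : a ⟶ b), P f → Epi f)
    (hQmono : ∀ {a b : C} (f : a ⟶ b), Q f → Mono f)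
    (hPiso : ∀ {a b : C} (f : a ⟶ b), IsIso f → P f)
    (hQiso : ∀ {a b : C} (f : a ⟶ b), IsIso f → Q f)
    (hPcomp : ∀ {a b c : C} (f : a ⟶ b) (g : b ⟶ c), P f → P g → P (f ≫ g))
    (hQcomp : ∀ {a b c : C} (f : a ⟶ b) (g : b ⟶ c), Q f → Q g → Q (f ≫ g))
    (hfact : ∀ {c d : C} (f : c ⟶ d),
      ∃ (z : C) (e : c ⟶ z) (m : z ⟶ d), P e ∧ Q m ∧ e ≫ m = f)
    (huniq : ∀ {c d z z' : C} (e : c ⟶ z) (e' : c ⟶ z') (m : z ⟶ d) (m' : z' ⟶ d),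
      P e → P e' → Q m → Q m' → e ≫ m = e' ≫ m' →
      ∃ φ : z ≅ z', e ≫ φ.hom = e' ∧ φ.hom ≫ m' = m) :
    (Matrix.of fun c d : C => (Nat.card (c ⟶ d) : ℚ)) =
      (Matrix.of fun c d : C =>
        (Nat.card {f : c ⟶ d // P f} : ℚ) / (Nat.card (Aut d) : ℚ)) *
      (Matrix.of fun c d : C => if c = d then (Nat.card (Aut c) : ℚ) else 0) *
      (Matrix.of fun c d : C =>
        (Nat.card {f : c ⟶ d // Q f} : ℚ) / (Nat.card (Aut c) : ℚ)) := by
  have : P.IsStableUnderComposition := ⟨hPcomp⟩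
  have : Q.IsStableUnderComposition := ⟨hQcomp⟩
  have : P.RespectsIso :=
    MorphismProperty.respectsIso_of_isStableUnderComposition fun _ _ f hf => hPiso f hf
  have : Q.RespectsIso :=
    MorphismProperty.respectsIso_of_isStableUnderComposition fun _ _ f hf => hQiso f hf
  have : P.HasFactorization Q := ⟨fun f =>
    let ⟨z, e, m, he, hm, hf⟩ := hfact f
    ⟨⟨z, e, m, hf, he, hm⟩⟩⟩
  have hdiag : (Matrix.of fun c d : C => if c = d then (Nat.card (Aut c) : ℚ) else 0) =
      Matrix.diagonal fun c => (Nat.card (Aut c) : ℚ) := rfl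
  ext c d
  rw [hdiag, Matrix.mul_apply, Matrix.of_apply,
    MorphismProperty.card_hom_eq_sum hskel (fun _ _ f hf => hPepi f hf)
      fun _ _ _ _ => huniq]
  refine Finset.sum_congr rfl fun z _ => ?_
  have hAut : (Nat.card (Aut z) : ℚ) ≠ 0 := by exact_mod_cast Nat.card_pos.ne'
  simp only [Matrix.mul_diagonal, Matrix.of_apply]
  field_simp
end

section
/- (Kernel of the restriction map on rational abstract Burnside rings.) Let D be a category with finitely many objects and finite hom-sets, and let S be a set of objects of D such that there are no morphisms in D from any object of S to any object not in S (i.e., c ∈ S and d ∉ S implies Hom(c,d) is empty). Assume that the matrix H_S over ℚ indexed by S with entries (H_S) c d = #Hom(c,d) is invertible. Then the ℚ-linear map ψ : (objects of D → ℚ) → (S → ℚ) defined by ψ(x)(c) = Σ over all objects d of D of x(d) · #Hom(c,d) has kernel exactly the set of x vanishing on S, which is the ℚ-span of the basis vectors Pi.single d 1 for d ∉ S. -/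
/-!
Since nothing leads out of `S`, the coordinates of `ψ x` only involve `x` restricted to `S`:
`ψ x = H_S (x|_S)`. Invertibility of `H_S` then makes `ψ x = 0` equivalent to `x|_S = 0`, and the
vectors vanishing on `S` are spanned by the standard basis vectors outside `S`.
-/

open CategoryTheory

namespace Matrix

variable {ι R : Type*} [Fintype ι] [CommRing R] (A : Matrix ι ι R) {S : Set ι}
  [DecidablePred (· ∈ S)]

theorem sum_mul_eq_submatrix_mulVec (hA : ∀ c ∈ S, ∀ d ∉ S, A c d = 0) (x : ι → R) (c : S) :
    ∑ d, x d * A c d = (A.submatrix ((↑) : S → ι) (↑) *ᵥ fun d : S => x d) c := by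
  rw [← Fintype.sum_subtype_add_sum_subtype (· ∈ S)]
  have hout : ∑ d : {d // d ∉ S}, x d * A c d = 0 :=
    Fintype.sum_eq_zero _ fun d => by rw [hA c c.2 d d.2, mul_zero]
  rw [hout, add_zero]
  simp only [mulVec, dotProduct, submatrix_apply, mul_comm]

theorem setOf_sum_mul_eq_zero_eq [DecidableEq ι] (hA : ∀ c ∈ S, ∀ d ∉ S, A c d = 0)
    (hdet : (A.submatrix ((↑) : S → ι) (↑)).det ∈ nonZeroDivisors R) :
    {x : ι → R | (fun c : S => ∑ d, x d * A c d) = 0} = {x : ι → R | ∀ c ∈ S, x c = 0} := by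
  ext x
  rw [Set.mem_ofPred_eq, Set.mem_ofPred_eq, funext (A.sum_mul_eq_submatrix_mulVec hA x)]
  constructor
  · intro hx c hc
    exact congrFun (eq_zero_of_det_mem_nonZeroDivisors_of_mulVec_eq_zero hdet hx) ⟨c, hc⟩
  · intro hx
    have hxS : (fun d : S => x d) = 0 := funext fun d => hx d d.2
    rw [hxS, mulVec_zero]

end Matrix

theorem Pi.setOf_forall_mem_eq_zero_eq_span_single {ι R : Type*} [Fintype ι] [DecidableEq ι]
    [Semiring R] (S : Set ι) :
    {x : ι → R | ∀ c ∈ S, x c = 0} =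
      ↑(Submodule.span R {v : ι → R | ∃ d ∉ S, v = Pi.single d 1}) := by
  have himage : {v : ι → R | ∃ d ∉ S, v = Pi.single d 1} = Pi.basisFun R ι '' Sᶜ := by
    ext v
    simp [eq_comm]
  ext x
  simp only [himage, SetLike.mem_coe, (Pi.basisFun R ι).mem_span_image, Set.subset_def,
    Finsupp.mem_support_iff, Pi.basisFun_repr, Set.mem_compl_iff, Set.mem_ofPred_eq]
  exact forall_congr' fun c => not_imp_not.symm

/-- The matrix `H_S` of the paper is its `S × S` block. -/
noncomputable def homCardMatrix (D : Type*) [Category D] : Matrix D D ℚ :=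
  Matrix.of fun c d => (Nat.card (c ⟶ d) : ℚ)

theorem homCardMatrix_apply_of_isEmpty {D : Type*} [Category D] {c d : D} [IsEmpty (c ⟶ d)] :
    homCardMatrix D c d = 0 := by
  simp [homCardMatrix]

/-- Kernel of the restriction map on rational abstract Burnside rings: if `S` is a set
of objects of `D` admitting no morphisms out of `S` into its complement, and the
hom-set matrix of `S` is invertible, then the kernel of
`x ↦ (fun c : S => ∑ d, x d * #Hom(c,d))` consists exactly of the `x` vanishing on `S`,
which is the `ℚ`-span of the basis vectors `Pi.single d 1` for `d ∉ S`. -/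
theorem kernel_restriction_burnside {D : Type*} [Category D] [Fintype D]
    [DecidableEq D] [∀ a b : D, Finite (a ⟶ b)]
    (S : Set D) [DecidablePred (· ∈ S)]
    (hS : ∀ c d : D, c ∈ S → d ∉ S → IsEmpty (c ⟶ d))
    (hinv : IsUnit (Matrix.of fun c d : S =>
      (Nat.card ((c : D) ⟶ (d : D)) : ℚ)).det) :
    {x : D → ℚ |
        (fun c : S => ∑ d : D, x d * (Nat.card ((c : D) ⟶ d) : ℚ)) = 0} =
      {x : D → ℚ | ∀ c ∈ S, x c = 0} ∧
    {x : D → ℚ | ∀ c ∈ S, x c = 0} =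
      ↑(Submodule.span ℚ {v : D → ℚ | ∃ d ∉ S, v = Pi.single d 1}) := by
  have hH : ∀ c ∈ S, ∀ d ∉ S, homCardMatrix D c d = 0 := fun c hc d hd =>
    have := hS c d hc hd
    homCardMatrix_apply_of_isEmpty
  exact ⟨(homCardMatrix D).setOf_sum_mul_eq_zero_eq hH hinv.mem_nonZeroDivisors,
    Pi.setOf_forall_mem_eq_zero_eq_span_single S⟩
end

section
/- For every natural number d ≥ 1, the matrix H(d) : Matrix (Fin d) (Fin d) ℚ with entries H(d) i j = surj(i+1, j+1) (the number of surjections from a set with i+1 elements onto a set with j+1 elements) has determinant equal to the product over k from 1 to d of k!. In particular H(d) is invertible over ℚ. (This is the hom-set matrix of the category Epi_{≤d} of finite sets of cardinality at most d and surjections; its invertibility says the rational Goodwillie–Burnside ring A_ℚ(d) is isomorphic to ℚ^d.) -/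
/-!
Sorting all maps `Fin n → Fin k` by their image gives `k ^ n = ∑ j, k.choose j * surj n j`.
In matrix form, `H * B = P` with `B l j = (j + 1).choose (l + 1)` unitriangular and
`P i j = (j + 1) ^ (i + 1)` a Vandermonde matrix whose columns are scaled by `j + 1`.
Hence `det H = det P = d! * sf (d - 1) = ∏_{k ≤ d} k!`.
-/

noncomputable def surj (n k : ℕ) : ℕ := Nat.card {f : Fin n → Fin k // Function.Surjective f}

open Finset Function Matrix
open scoped Nat

lemma surj_succ_zero (n : ℕ) : surj (n + 1) 0 = 0 := by
  have : IsEmpty {f : Fin (n + 1) → Fin 0 // Surjective f} := ⟨fun f => (f.1 0).elim0⟩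
  simp [surj]

lemma card_surjective_eq_surj (α β : Type*) [Finite α] [Finite β] :
    Nat.card {f : α → β // Surjective f} = surj (Nat.card α) (Nat.card β) :=
  Nat.card_congr <| (Equiv.arrowCongr (Finite.equivFin α) (Finite.equivFin β)).subtypeEquiv
    fun _ => ((Equiv.comp_surjective _ _).trans (Equiv.surjective_comp _ _)).symm

def Set.rangeEqEquivSurjective {α β : Type*} (s : Set β) :
    {f : α → β // Set.range f = s} ≃ {g : α → s // Surjective g} where
  toFun f := ⟨s.codRestrict f.1 (fun x => f.2.subset (Set.mem_range_self x)),
    (Set.surjective_codRestrict _).2 f.2⟩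
  invFun g := ⟨Subtype.val ∘ g.1, by
    rw [Set.range_comp, g.2.range_eq, Set.image_univ, Subtype.range_coe]⟩
  left_inv _ := rfl
  right_inv _ := rfl

lemma card_range_eq_surj (α : Type*) {β : Type*} [Finite α] (s : Set β) [Finite s] :
    Nat.card {f : α → β // Set.range f = s} = surj (Nat.card α) (Nat.card s) := by
  rw [Nat.card_congr (Set.rangeEqEquivSurjective s), card_surjective_eq_surj]

lemma sum_choose_mul_surj (n k : ℕ) :
    ∑ j ∈ range (k + 1), k.choose j * surj n j = k ^ n := by
  classical
  have hfiber : ∀ S : Finset (Fin k), #{f : Fin n → Fin k | univ.image f = S} = surj n #S := by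
    intro S
    rw [← Fintype.card_subtype, ← Nat.card_eq_fintype_card]
    simp_rw [← coe_inj, coe_image, coe_univ, Set.image_univ]
    simpa using card_range_eq_surj (Fin n) (S : Set (Fin k))
  calc ∑ j ∈ range (k + 1), k.choose j * surj n j
      = ∑ S ∈ (univ : Finset (Fin k)).powerset, surj n #S := by
        rw [sum_powerset_apply_card]; simp
    _ = #(univ : Finset (Fin n → Fin k)) := by
        rw [card_eq_sum_card_fiberwise (f := fun f => univ.image f) (t := univ.powerset)
          (fun f _ => mem_powerset.2 (subset_univ _))]
        simp only [hfiber]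
    _ = k ^ n := by simp

lemma sum_surj_succ_mul_choose (n k : ℕ) :
    ∑ j ∈ range k, surj (n + 1) (j + 1) * k.choose (j + 1) = k ^ (n + 1) := by
  have h := sum_choose_mul_surj (n + 1) k
  rw [sum_range_succ', surj_succ_zero, mul_zero, add_zero] at h
  simpa only [mul_comm] using h

noncomputable def surjMatrix (R : Type*) [Semiring R] (d : ℕ) : Matrix (Fin d) (Fin d) R :=
  of fun i j => (surj ((i : ℕ) + 1) ((j : ℕ) + 1) : R)

def binomialMatrix (R : Type*) [Semiring R] (d : ℕ) : Matrix (Fin d) (Fin d) R :=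
  of fun i j => ((j + 1 : ℕ).choose (i + 1) : R)

def powMatrix (R : Type*) [Semiring R] (d : ℕ) : Matrix (Fin d) (Fin d) R :=
  of fun i j => ((j + 1 : ℕ) : R) ^ ((i : ℕ) + 1)

lemma surjMatrix_mul_binomialMatrix (R : Type*) [Semiring R] (d : ℕ) :
    surjMatrix R d * binomialMatrix R d = powMatrix R d := by
  ext i j
  rw [mul_apply]
  simp only [surjMatrix, binomialMatrix, powMatrix, of_apply]
  rw [Fin.sum_univ_eq_sum_range
      (fun l => (surj (i + 1) (l + 1) : R) * (((j : ℕ) + 1).choose (l + 1) : ℕ)),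
    ← sum_subset (range_subset_range.2 j.isLt)]
  · norm_cast
    exact congrArg Nat.cast (sum_surj_succ_mul_choose i (j + 1))
  · intro l _ hl
    rw [Nat.choose_eq_zero_of_lt (by simp only [mem_range, not_lt] at hl; omega), Nat.cast_zero, mul_zero]

lemma det_binomialMatrix (R : Type*) [CommRing R] (d : ℕ) : (binomialMatrix R d).det = 1 := by
  rw [det_of_isUpperTriangular]
  · simp [binomialMatrix]
  · intro i j hij
    simp [binomialMatrix, Nat.choose_eq_zero_of_lt (Nat.succ_lt_succ (show (j : ℕ) < i from hij))]

lemma powMatrix_eq_transpose_diagonal_mul_vandermonde (R : Type*) [CommRing R] (d : ℕ) :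
    powMatrix R d = (diagonal (fun j : Fin d => ((j + 1 : ℕ) : R)) *
      vandermonde fun j : Fin d => ((j + 1 : ℕ) : R))ᵀ := by
  ext i j
  simp [powMatrix, pow_succ', diagonal_mul]

lemma det_powMatrix (R : Type*) [CommRing R] (d : ℕ) : (powMatrix R d).det = sf d := by
  cases d with
  | zero => simp
  | succ m =>
    rw [powMatrix_eq_transpose_diagonal_mul_vandermonde, det_transpose, det_mul, det_diagonal]
    simp only [Nat.cast_add, Nat.cast_one, det_vandermonde_add,
      det_vandermonde_id_eq_superFactorial]
    norm_cast
    rw [Fin.prod_univ_eq_prod_range (· + 1), prod_range_add_one_eq_factorial,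
      Nat.superFactorial_succ]

lemma det_surjMatrix_eq_superFactorial (R : Type*) [CommRing R] (d : ℕ) :
    (surjMatrix R d).det = sf d := by
  have h := congrArg det (surjMatrix_mul_binomialMatrix R d)
  rwa [det_mul, det_binomialMatrix, mul_one, det_powMatrix] at h

theorem det_surjMatrix_general (d : ℕ) :
    (Matrix.of fun i j : Fin d => (surj ((i : ℕ) + 1) ((j : ℕ) + 1) : ℚ)).det =
      ∏ k ∈ Finset.Icc 1 d, (Nat.factorial k : ℚ) ∧
    IsUnit (Matrix.of fun i j : Fin d =>
      (surj ((i : ℕ) + 1) ((j : ℕ) + 1) : ℚ)).det := by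
  change (surjMatrix ℚ d).det = _ ∧ IsUnit (surjMatrix ℚ d).det
  rw [det_surjMatrix_eq_superFactorial, ← Nat.prod_Icc_factorial, Nat.cast_prod]
  exact ⟨rfl, isUnit_iff_ne_zero.2 (by positivity)⟩

/-- The hom-set matrix of `Epi_{≤ d}`, with entries the surjection numbers
`surj (i+1) (j+1)`, has determinant `∏_{k=1}^{d} k!`; in particular it is invertible
over `ℚ`. -/
theorem det_surjMatrix (d : ℕ) (hd : 1 ≤ d) :
    (Matrix.of fun i j : Fin d => (surj ((i : ℕ) + 1) ((j : ℕ) + 1) : ℚ)).det =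
      ∏ k ∈ Finset.Icc 1 d, (Nat.factorial k : ℚ) ∧
    IsUnit (Matrix.of fun i j : Fin d =>
      (surj ((i : ℕ) + 1) ((j : ℕ) + 1) : ℚ)).det :=
  det_surjMatrix_general d
end

section
/- For all natural numbers n and m, the sum over k from 0 to n of ((descPochhammer ℤ n).coeff k) · surj(k, m) equals n! if n = m and 0 otherwise. (This is the identity Σ_k s(n,k)·|surj(k,m)| = n!·δ_{nm} expressing that the matrix of signed Stirling numbers of the first kind divided by factorials inverts the matrix of surjection numbers, used in the paper's computation of the inverse hom-set matrix of Epi_{≤d}.) -/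
open Finset Function

theorem eq_of_sum_choose_nsmul_eq {M : Type*} [AddCommGroup M] {a b : ℕ → M}
    (h : ∀ m, ∑ j ∈ range (m + 1), m.choose j • a j =
      ∑ j ∈ range (m + 1), m.choose j • b j) :
    a = b := by
  funext m
  induction m using Nat.strong_induction_on with
  | _ m ih =>
    have hm := h m
    rw [sum_range_succ, sum_range_succ, Nat.choose_self, one_smul, one_smul,
      sum_congr rfl fun j hj => by rw [ih j (mem_range.1 hj)]] at hm
    exact add_left_cancel hm

def imageEqEquivSurjective {α β : Type*} [Fintype α] [DecidableEq β] (s : Finset β) :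
    {f : α → β // univ.image f = s} ≃ {g : α → s // Surjective g} where
  toFun f := ⟨fun x => ⟨f.1 x, by simp [← f.2]⟩, by
    rintro ⟨y, hy⟩
    obtain ⟨f, rfl⟩ := f
    obtain ⟨x, -, hx⟩ := mem_image.1 hy
    exact ⟨x, Subtype.ext hx⟩⟩
  invFun g := ⟨fun x => g.1 x, by
    ext y
    refine ⟨fun hy => ?_, fun hy => ?_⟩
    · obtain ⟨x, -, rfl⟩ := mem_image.1 hy
      exact (g.1 x).2
    · obtain ⟨x, hx⟩ := g.2 ⟨y, hy⟩
      exact mem_image.2 ⟨x, mem_univ x, congrArg Subtype.val hx⟩⟩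
  left_inv _ := rfl
  right_inv _ := rfl

theorem card_surjective_eq_surj_s14 (k : ℕ) (α : Type*) [Fintype α] :
    Nat.card {g : Fin k → α // Surjective g} = surj k (Fintype.card α) :=
  Nat.card_congr <| Equiv.subtypeEquiv (Equiv.arrowCongr (Equiv.refl _) (Fintype.equivFin α))
    fun g => ((Fintype.equivFin α).comp_surjective g).symm

theorem pow_eq_sum_choose_mul_surj (k m : ℕ) :
    m ^ k = ∑ j ∈ range (m + 1), m.choose j * surj k j := by
  classical
  have hfiber (s : Finset (Fin m)) :
      Fintype.card {f : Fin k → Fin m // univ.image f = s} = surj k s.card := by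
    rw [← Nat.card_eq_fintype_card, Nat.card_congr (imageEqEquivSurjective s),
      card_surjective_eq_surj_s14, Fintype.card_coe]
  calc m ^ k = Fintype.card (Fin k → Fin m) := by simp
    _ = ∑ s : Finset (Fin m), surj k s.card := by
      rw [Fintype.card_congr (Equiv.sigmaFiberEquiv fun f : Fin k → Fin m => univ.image f).symm,
        Fintype.card_sigma]
      simp only [hfiber]
    _ = ∑ j ∈ range (m + 1), m.choose j * surj k j := by
      rw [← powerset_univ, sum_powerset, card_univ, Fintype.card_fin]
      refine sum_congr rfl fun j _ => ?_
      rw [sum_congr rfl fun t ht => by rw [(mem_powersetCard.1 ht).2], sum_const,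
        card_powersetCard, card_univ, Fintype.card_fin, smul_eq_mul]

theorem sum_coeff_descPochhammer_mul_pow {R : Type*} [Ring R] [IsDomain R] (n : ℕ) (x : R) :
    ∑ k ∈ range (n + 1), (descPochhammer R n).coeff k * x ^ k = (descPochhammer R n).eval x := by
  rw [Polynomial.eval_eq_sum_range, descPochhammer_natDegree]

theorem sum_choose_nsmul_sum_coeff_descPochhammer_mul_surj (n m : ℕ) :
    ∑ j ∈ range (m + 1), m.choose j •
        ∑ k ∈ range (n + 1), (descPochhammer ℤ n).coeff k * (surj k j : ℤ) =
      m.descFactorial n := by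
  simp_rw [smul_sum, nsmul_eq_mul]
  rw [sum_comm, ← descPochhammer_eval_eq_descFactorial, ← sum_coeff_descPochhammer_mul_pow]
  refine sum_congr rfl fun k _ => ?_
  rw [← Nat.cast_pow, pow_eq_sum_choose_mul_surj k m, Nat.cast_sum, mul_sum]
  exact sum_congr rfl fun j _ => by push_cast; ring

/-- The identity `∑_{k=0}^{n} s(n,k) · |surj(k,m)| = n! · δ_{n m}` in `ℤ`, where
`s(n,k)` is the signed Stirling number of the first kind, realized as the `k`-th
coefficient of the falling factorial polynomial `descPochhammer ℤ n`. -/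
theorem stirling_surj_orthogonality (n m : ℕ) :
    ∑ k ∈ Finset.range (n + 1),
        ((descPochhammer ℤ n).coeff k) * (surj k m : ℤ) =
      if n = m then (Nat.factorial n : ℤ) else 0 := by
  revert m
  rw [← funext_iff]
  refine eq_of_sum_choose_nsmul_eq fun m => ?_
  rw [sum_choose_nsmul_sum_coeff_descPochhammer_mul_surj,
    Nat.descFactorial_eq_factorial_mul_choose]
  simp only [smul_ite, smul_zero, sum_ite_eq, mem_range]
  split_ifs with h
  · simp [mul_comm]
  · simp [Nat.choose_eq_zero_of_lt (by omega : m < n)]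
end

section
/- (The kernel of A_ℚ(d) → A_ℚ(d−1) is generated by the top class [d].) Let d ≥ 2. The ℚ-linear map ψ : (Fin d → ℚ) → (Fin (d−1) → ℚ) defined by ψ(x)(i) = Σ over j : Fin d of x(j) · surj(i+1, j+1) has kernel equal to the one-dimensional span of the basis vector Pi.single (last index of Fin d) 1. (This is the map on rational Goodwillie–Burnside rings induced by the inclusion Epi_{≤ d−1} ↪ Epi_{≤ d}, whose kernel is generated by [d], equivalently by the top idempotent e_d = (1/d!)·[d].) -/
lemma surj_eq_zero_of_lt {n k : ℕ} (h : n < k) : surj n k = 0 := by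
  have : IsEmpty {f : Fin n → Fin k // Function.Surjective f} :=
    ⟨fun f => by
      have := Fintype.card_le_of_surjective f.1 f.2
      simp only [Fintype.card_fin] at this
      omega⟩
  exact Nat.card_of_isEmpty

lemma surj_self_ne_zero (n : ℕ) : surj n n ≠ 0 :=
  have : Nonempty {f : Fin n → Fin n // Function.Surjective f} := ⟨⟨id, Function.surjective_id⟩⟩
  Nat.card_pos.ne'

lemma eq_zero_of_sum_mul_lowerTriangular {R : Type*} [Semiring R] [NoZeroDivisors R] {d m : ℕ}
    (a : ℕ → ℕ → R) (h_lower : ∀ i j, i < j → a i j = 0) (h_diag : ∀ i, a i i ≠ 0)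
    (x : Fin d → R) (hx : ∀ i < m, ∑ j : Fin d, x j * a i j = 0) (j : Fin d) (hj : (j : ℕ) < m) :
    x j = 0 := by
  induction j using WellFoundedLT.induction with
  | _ j ih =>
    have hrow := hx j hj
    rw [Finset.sum_eq_single_of_mem j (Finset.mem_univ j)] at hrow
    · exact (mul_eq_zero.mp hrow).resolve_right (h_diag j)
    · intro k _ hkj
      rcases lt_or_gt_of_ne hkj with hlt | hgt
      · rw [ih k hlt (lt_trans (Fin.lt_def.mp hlt) hj), zero_mul]
      · rw [h_lower j k hgt, mul_zero]

/-- The kernel of the map `A_ℚ(d) → A_ℚ(d-1)` on rational Goodwillie–Burnside rings,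
realized as the `ℚ`-linear map `(Fin d → ℚ) → (Fin (d-1) → ℚ)` with
`ψ(x)(i) = ∑ j, x j · surj (i+1) (j+1)`, is exactly the span of the top basis vector
`Pi.single ⟨d-1, _⟩ 1` corresponding to the class `[d]`. -/
theorem kernel_goodwillieBurnside_restriction (d : ℕ) (hd : 2 ≤ d) :
    {x : Fin d → ℚ |
        (fun i : Fin (d - 1) =>
          ∑ j : Fin d, x j * (surj ((i : ℕ) + 1) ((j : ℕ) + 1) : ℚ)) = 0} =
      ↑(Submodule.span ℚ
        ({Pi.single (⟨d - 1, by omega⟩ : Fin d) 1} : Set (Fin d → ℚ))) := by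
  set top : Fin d := ⟨d - 1, by omega⟩
  have h_lower : ∀ i j : ℕ, i < j → (surj (i + 1) (j + 1) : ℚ) = 0 := fun i j hij => by
    rw [surj_eq_zero_of_lt (by omega), Nat.cast_zero]
  have h_diag : ∀ i : ℕ, (surj (i + 1) (i + 1) : ℚ) ≠ 0 := fun i =>
    Nat.cast_ne_zero.mpr (surj_self_ne_zero _)
  ext x
  simp only [Set.mem_ofPred_eq, SetLike.mem_coe, Submodule.mem_span_singleton]
  constructor
  · intro hx
    refine ⟨x top, funext fun j => ?_⟩
    rcases eq_or_ne j top with rfl | hj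
    · simp
    · rw [Pi.smul_apply, Pi.single_eq_of_ne hj, smul_zero, eq_comm]
      refine eq_zero_of_sum_mul_lowerTriangular _ h_lower h_diag x (m := d - 1)
        (fun i hi => congrFun hx ⟨i, hi⟩) j ?_
      exact lt_of_le_of_ne (Nat.le_sub_one_of_lt j.isLt) (Fin.val_ne_of_ne hj)
  · rintro ⟨c, rfl⟩
    funext i
    simp only [Pi.zero_apply, Pi.smul_apply, smul_eq_mul, mul_assoc, ← Finset.mul_sum]
    rw [Finset.sum_eq_single_of_mem top (Finset.mem_univ _) fun j _ hj => by simp [hj],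
      h_lower _ _ (by simp only [top]; omega)]
    simp
end
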